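/- arXiv:math/0303094 — 2 statements merged into one kernel-verified Lean document; each statement's English description precedes it below -/
import Mathlib

section
/- Let A ∈ ℤ^{m×n}, b ∈ ℤ^m with Ω := {x ∈ ℝ^n : Ax = b, x ≥ 0} compact, and let α ∈ ℕ^n, β ∈ ℕ satisfy A_{jk} + α_k ≥ 0 for all j,k, b_j + β ≥ 0 for all j, and β ≥ max{∑_j α_j x_j : x ∈ Ω}. Then Ax = b has a solution x ∈ ℕ^n if and only if the polynomial z^b (zy)^β - 1 ∈ ℝ[z_1,…,z_m,y] can be written as Q_0(z,y)(z_1···z_m·y - 1) + ∑_{j=1}^n Q_j(z,y)(z^{A_j}(z_1···z_m·y)^{α_j} - 1) for polynomials Q_0,…,Q_n in ℝ[z_1,…,z_m,y] with nonnegative coefficients. -/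
/-!
Passing to exponent vectors, `z^t - 1` is a combination of the binomials `z^{e_j} - 1` with
coefficient polynomials having nonnegative coefficients exactly when `t` lies in the submonoid of
`ℕ^{m+1}` generated by the `e_j`. One direction is the identity
`z^{a+b} - 1 = z^b (z^a - 1) + (z^b - 1)`. For the other, the linear functional sending `z^d` to `0`
if `d` lies in the submonoid and to `1` otherwise is `≤ 0` on every `Q (z^{e_j} - 1)` with `Q ≥ 0`,
but equals `1` on `z^t - 1` when `t` does not.

The extra variable `y` makes all exponents nonnegative, and the column `z_1 ⋯ z_m y` absorbs the
slack `β - ∑ α_j x_j`, which is nonnegative by the choice of `β`; so `(b + β, β)` lies in the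
submonoid generated by `(1, 1)` and the columns `(A_j + α_j, α_j)` iff `A x = b` has a solution in
`ℕ^n`.
-/

open MvPolynomial

namespace MvPolynomial

section NonnegCoeffs

variable (σ R : Type*) [CommSemiring R] [PartialOrder R] [IsOrderedRing R]

def nonnegCoeffs : Subsemiring (MvPolynomial σ R) where
  carrier := {p | ∀ d, 0 ≤ p.coeff d}
  zero_mem' d := by simp
  one_mem' d := by classical rw [coeff_one]; split_ifs <;> simp
  add_mem' hp hq d := by rw [coeff_add]; exact add_nonneg (hp d) (hq d)
  mul_mem' {p q} hp hq d := by
    classical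
    rw [coeff_mul]; exact Finset.sum_nonneg fun x _ => mul_nonneg (hp _) (hq _)

variable {σ R}

@[simp]
theorem mem_nonnegCoeffs {p : MvPolynomial σ R} : p ∈ nonnegCoeffs σ R ↔ ∀ d, 0 ≤ p.coeff d :=
  Iff.rfl

theorem monomial_mem_nonnegCoeffs {d : σ →₀ ℕ} {c : R} (hc : 0 ≤ c) :
    monomial d c ∈ nonnegCoeffs σ R := by
  classical
  intro e; rw [coeff_monomial]; split_ifs <;> simp [hc]

end NonnegCoeffs

section WeightFunctional

variable {σ R : Type*} [CommSemiring R]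

noncomputable def weightFunctional (w : (σ →₀ ℕ) → R) : MvPolynomial σ R →ₗ[R] R :=
  (basisMonomials σ R).constr R w

@[simp]
theorem weightFunctional_monomial (w : (σ →₀ ℕ) → R) (d : σ →₀ ℕ) (c : R) :
    weightFunctional w (monomial d c) = c * w d := by
  have : monomial d c = c • basisMonomials σ R d := by simp [smul_monomial]
  rw [this, map_smul, weightFunctional, Module.Basis.constr_basis, smul_eq_mul]

end WeightFunctional

section BinomialCone

variable {σ R ι : Type*} [CommRing R] [PartialOrder R] [IsOrderedRing R] [Fintype ι]

variable (R) in
def binomialCone (e : ι → σ →₀ ℕ) : Set (MvPolynomial σ R) :=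
  {p | ∃ Q : ι → MvPolynomial σ R, (∀ j, Q j ∈ nonnegCoeffs σ R) ∧
    p = ∑ j, Q j * (monomial (e j) 1 - 1)}

theorem monomial_sub_one_mem_binomialCone {e : ι → σ →₀ ℕ} {t : σ →₀ ℕ}
    (ht : t ∈ AddSubmonoid.closure (Set.range e)) :
    monomial t (1 : R) - 1 ∈ binomialCone R e := by
  classical
  induction ht using AddSubmonoid.closure_induction with
  | mem _ h =>
    obtain ⟨k, rfl⟩ := h
    refine ⟨Pi.single k 1, fun j => ?_, by simp [Pi.single_apply]⟩
    rcases eq_or_ne j k with rfl | hjk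
    · simp [(nonnegCoeffs σ R).one_mem]
    · simp [hjk, (nonnegCoeffs σ R).zero_mem]
  | zero => exact ⟨0, fun _ => (nonnegCoeffs σ R).zero_mem, by simp⟩
  | add a b _ _ ha hb =>
    obtain ⟨P, hP, ha⟩ := ha
    obtain ⟨Q, hQ, hb⟩ := hb
    refine ⟨fun j => monomial b 1 * P j + Q j, fun j =>
      add_mem (mul_mem (monomial_mem_nonnegCoeffs zero_le_one) (hP j)) (hQ j), ?_⟩
    have : monomial (a + b) (1 : R) - 1 = monomial b 1 * (monomial a 1 - 1) + (monomial b 1 - 1) := by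
      rw [mul_sub, monomial_mul, add_comm b, mul_one]; ring
    simp only [this, ha, hb, Finset.mul_sum, add_mul, mul_assoc, Finset.sum_add_distrib]

theorem weightFunctional_mul_monomial_sub_one_nonpos {w : (σ →₀ ℕ) → R} {e : σ →₀ ℕ}
    (hw : ∀ d, w (d + e) ≤ w d) {q : MvPolynomial σ R} (hq : q ∈ nonnegCoeffs σ R) :
    weightFunctional w (q * (monomial e 1 - 1)) ≤ 0 := by
  rw [q.as_sum, Finset.sum_mul, map_sum]
  refine Finset.sum_nonpos fun d _ => ?_
  rw [mul_sub, mul_one, monomial_mul, mul_one, map_sub, weightFunctional_monomial,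
    weightFunctional_monomial, ← mul_sub]
  exact mul_nonpos_of_nonneg_of_nonpos (hq d) (sub_nonpos.2 (hw d))

theorem weightFunctional_le_of_mem_binomialCone {w : (σ →₀ ℕ) → R} {e : ι → σ →₀ ℕ}
    (hw : ∀ d j, w (d + e j) ≤ w d) {t : σ →₀ ℕ} (ht : monomial t (1 : R) - 1 ∈ binomialCone R e) :
    w t ≤ w 0 := by
  obtain ⟨Q, hQ, h⟩ := ht
  have h := congrArg (weightFunctional w) h
  rw [map_sub, one_def, weightFunctional_monomial, weightFunctional_monomial,
    one_mul, one_mul, map_sum] at h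
  exact sub_nonpos.1 (h ▸ Finset.sum_nonpos fun j _ =>
    weightFunctional_mul_monomial_sub_one_nonpos (hw · j) (hQ j))

theorem mem_closure_of_monomial_sub_one_mem_binomialCone [Nontrivial R] {e : ι → σ →₀ ℕ}
    {t : σ →₀ ℕ} (ht : monomial t (1 : R) - 1 ∈ binomialCone R e) :
    t ∈ AddSubmonoid.closure (Set.range e) := by
  classical
  set S := AddSubmonoid.closure (Set.range e)
  -- `S + e j ⊆ S`, so the indicator of the complement of `S` can only drop along `e j`
  have hw : ∀ d j, (if d + e j ∈ S then 0 else 1 : R) ≤ if d ∈ S then 0 else 1 := by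
    intro d j
    by_cases hd : d ∈ S
    · simp [hd, add_mem hd (AddSubmonoid.subset_closure ⟨j, rfl⟩)]
    · simp only [hd, if_false]; split_ifs <;> simp
  by_contra hSt
  have := weightFunctional_le_of_mem_binomialCone (w := fun d => if d ∈ S then 0 else 1) hw ht
  simp only [hSt, S.zero_mem, if_false, if_true] at this
  exact zero_lt_one.not_ge this

theorem monomial_sub_one_mem_binomialCone_iff [Nontrivial R] {e : ι → σ →₀ ℕ} {t : σ →₀ ℕ} :
    monomial t (1 : R) - 1 ∈ binomialCone R e ↔ t ∈ AddSubmonoid.closure (Set.range e) :=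
  ⟨mem_closure_of_monomial_sub_one_mem_binomialCone, monomial_sub_one_mem_binomialCone⟩

end BinomialCone

end MvPolynomial

section Homogenization

variable {m : ℕ}

/-- The exponent vector of `z^c y^k`, where `z_i` is `X i.castSucc` and `y` is `X (Fin.last m)`. -/
noncomputable def liftedExponent (c : Fin m → ℕ) (k : ℕ) : Fin (m + 1) →₀ ℕ :=
  Finsupp.equivFunOnFinite.symm (Fin.snoc c k)

@[simp]
theorem liftedExponent_castSucc (c : Fin m → ℕ) (k : ℕ) (i : Fin m) :
    liftedExponent c k i.castSucc = c i := by
  simp [liftedExponent]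

@[simp]
theorem liftedExponent_last (c : Fin m → ℕ) (k : ℕ) : liftedExponent c k (Fin.last m) = k := by
  simp [liftedExponent]

theorem prod_X_pow_mul_X_pow_eq_monomial {R : Type*} [CommSemiring R] (c : Fin m → ℕ) (k : ℕ) :
    (∏ i, X i.castSucc ^ c i) * X (Fin.last m) ^ k =
      monomial (liftedExponent c k) (1 : R) := by
  rw [monomial_eq, C_1, one_mul, Finsupp.prod_fintype _ _ fun _ => pow_zero _,
    Fin.prod_univ_castSucc]
  simp

theorem liftedExponent_mem_closure_iff {ι : Type*} [Fintype ι] (c : Fin m → ℕ) (k : ℕ)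
    (C : ι → Fin m → ℕ) (K : ι → ℕ) :
    liftedExponent c k ∈ AddSubmonoid.closure (Set.range fun j => liftedExponent (C j) (K j)) ↔
      ∃ y : ι → ℕ, (∀ i, c i = ∑ j, y j * C j i) ∧ k = ∑ j, y j * K j := by
  simp [AddSubmonoid.mem_closure_range_iff_of_fintype, Finsupp.ext_iff, Fin.forall_fin_succ',
    Finsupp.finsetSum_apply]

end Homogenization

theorem exists_nat_solution_iff_homogenized {m n : ℕ} {A : Matrix (Fin m) (Fin n) ℤ}
    {b : Fin m → ℤ} {α : Fin n → ℕ} {β : ℕ}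
    (hA : ∀ i k, 0 ≤ A i k + (α k : ℤ)) (hb : ∀ i, 0 ≤ b i + (β : ℤ))
    (hβ : ∀ x : Fin n → ℝ, (∀ j, 0 ≤ x j) → (∀ i, ∑ j, (A i j : ℝ) * x j = b i) →
      ∑ j, (α j : ℝ) * x j ≤ (β : ℝ)) :
    (∃ x : Fin n → ℕ, ∀ i, ∑ j, A i j * (x j : ℤ) = b i) ↔
      ∃ (s : ℕ) (x : Fin n → ℕ), (∀ i, (b i + β).toNat = s + ∑ j, x j * (A i j + α j).toNat) ∧
        β = s + ∑ j, x j * α j := by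
  have expand (x : Fin n → ℕ) (i : Fin m) :
      ∑ j, (x j : ℤ) * ((A i j + α j).toNat : ℤ) = ∑ j, A i j * x j + ∑ j, (x j : ℤ) * α j := by
    rw [← Finset.sum_add_distrib]
    exact Finset.sum_congr rfl fun j _ => by rw [Int.toNat_of_nonneg (hA i j)]; ring
  constructor
  · rintro ⟨x, hx⟩
    have hxβ : ∑ j, x j * α j ≤ β := by
      have := hβ (fun j => x j) (fun j => by positivity) fun i => by exact_mod_cast hx i
      exact_mod_cast (by simpa [mul_comm] using this : ((∑ j, x j * α j : ℕ) : ℝ) ≤ β)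
    refine ⟨β - ∑ j, x j * α j, x, fun i => ?_, by omega⟩
    zify [hxβ]
    rw [Int.toNat_of_nonneg (hb i), expand, hx]
    ring
  · rintro ⟨s, x, hx, hs⟩
    refine ⟨x, fun i => ?_⟩
    have hi := congrArg (fun k : ℕ => (k : ℤ)) (hx i)
    have hs := congrArg (fun k : ℕ => (k : ℤ)) hs
    push_cast [Int.toNat_of_nonneg (hb i)] at hi hs
    rw [expand] at hi
    linarith

theorem discrete_farkas_general_general
    (m n : ℕ) (A : Matrix (Fin m) (Fin n) ℤ) (b : Fin m → ℤ)
    (α : Fin n → ℕ) (β : ℕ)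
    (hA : ∀ i k, 0 ≤ A i k + (α k : ℤ))
    (hb : ∀ i, 0 ≤ b i + (β : ℤ))
    (hβ : ∀ x : Fin n → ℝ, (∀ j, 0 ≤ x j) →
      (∀ i, ∑ j, (A i j : ℝ) * x j = b i) →
      ∑ j, (α j : ℝ) * x j ≤ (β : ℝ)) :
    (∃ x : Fin n → ℕ, ∀ i, ∑ j, A i j * (x j : ℤ) = b i) ↔
    (∃ Q : Fin (n + 1) → MvPolynomial (Fin (m + 1)) ℝ,
      (∀ j d, 0 ≤ (Q j).coeff d) ∧
      (∏ i : Fin m, X i.castSucc ^ (b i + (β : ℤ)).toNat) *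
          X (Fin.last m) ^ β - 1 =
        Q 0 * ((∏ i : Fin m, X i.castSucc) * X (Fin.last m) - 1) +
        ∑ j : Fin n, Q j.succ *
          ((∏ i : Fin m, X i.castSucc ^ (A i j + (α j : ℤ)).toNat) *
            X (Fin.last m) ^ α j - 1)) := by
  have key := monomial_sub_one_mem_binomialCone_iff (R := ℝ)
    (t := liftedExponent (fun i => (b i + β).toNat) β)
    (e := fun j : Fin (n + 1) =>
      liftedExponent ((Fin.cons (fun _ => 1) fun j i => (A i j + α j).toNat : Fin (n + 1) → _) j)
        ((Fin.cons 1 α : Fin (n + 1) → ℕ) j))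
  rw [liftedExponent_mem_closure_iff, Fin.exists_fin_succ_pi] at key
  simp only [Fin.sum_univ_succ, Fin.cons_zero, Fin.cons_succ, mul_one] at key
  rw [exists_nat_solution_iff_homogenized hA hb hβ, ← key]
  simp only [binomialCone, Fin.sum_univ_succ, Fin.cons_zero, Fin.cons_succ, Set.mem_ofPred_eq,
    mem_nonnegCoeffs, ← prod_X_pow_mul_X_pow_eq_monomial, pow_one]

theorem discrete_farkas_general
    (m n : ℕ) (A : Matrix (Fin m) (Fin n) ℤ) (b : Fin m → ℤ)
    (hΩ : IsCompact {x : Fin n → ℝ | (∀ j, 0 ≤ x j) ∧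
      ∀ i, ∑ j, (A i j : ℝ) * x j = b i})
    (α : Fin n → ℕ) (β : ℕ)
    (hA : ∀ i k, 0 ≤ A i k + (α k : ℤ))
    (hb : ∀ i, 0 ≤ b i + (β : ℤ))
    (hβ : ∀ x : Fin n → ℝ, (∀ j, 0 ≤ x j) →
      (∀ i, ∑ j, (A i j : ℝ) * x j = b i) →
      ∑ j, (α j : ℝ) * x j ≤ (β : ℝ)) :
    (∃ x : Fin n → ℕ, ∀ i, ∑ j, A i j * (x j : ℤ) = b i) ↔
    (∃ Q : Fin (n + 1) → MvPolynomial (Fin (m + 1)) ℝ,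
      (∀ j d, 0 ≤ (Q j).coeff d) ∧
      (∏ i : Fin m, X i.castSucc ^ (b i + (β : ℤ)).toNat) *
          X (Fin.last m) ^ β - 1 =
        Q 0 * ((∏ i : Fin m, X i.castSucc) * X (Fin.last m) - 1) +
        ∑ j : Fin n, Q j.succ *
          ((∏ i : Fin m, X i.castSucc ^ (A i j + (α j : ℤ)).toNat) *
            X (Fin.last m) ^ α j - 1)) :=
  discrete_farkas_general_general m n A b α β hA hb hβ
end

section
/- Let A ∈ ℕ^{m×n} and b ∈ ℕ^m. If z^b - 1 = ∑_{j=1}^n Q_j(z)(z^{A_j} - 1) for some polynomials Q_j ∈ ℝ[z_1,…,z_m] with nonnegative coefficients, then such a representation also exists with all Q_j having coefficients in {0,1} (in particular, in ℤ with nonnegative entries). -/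
open MvPolynomial

/-!
Sum the coefficients of both sides of `z^b - 1 = ∑ Q_j (z^{A_j} - 1)` over a finite set `T` of
exponents that contains `0` and is closed under `γ ↦ γ + A_j` for `γ ∈ supp Q_j`: the left side
gives `[b ∈ T] - 1`, while each `Q_j (z^{A_j} - 1)` contributes a nonnegative amount, because
shifting by `A_j` keeps the mass of `Q_j` on `T` inside `T`. Taking for `T` the relevant exponents
in the monoid `ℕA` generated by the columns forces `b ∈ ℕA`.
Conversely, a chain `0 = γ_0, γ_1, …, γ_k = b` with `γ_{i+1} = γ_i + A_{j_i}` telescopes to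
`z^b - 1 = ∑_i z^{γ_i} (z^{A_{j_i}} - 1)`; skipping zero columns, the `γ_i` strictly increase, so
the resulting `P_j = ∑_{j_i = j} z^{γ_i}` have coefficients in `{0, 1}`.
-/

namespace MvPolynomial

variable {R σ ι : Type*}

theorem prod_X_pow_eq_monomial_equivFunOnFinite [CommSemiring R] [Fintype σ] (f : σ → ℕ) :
    ∏ i, X i ^ f i = monomial (Finsupp.equivFunOnFinite.symm f) (1 : R) := by
  rw [monomial_eq, C_1, one_mul, Finsupp.prod_fintype _ _ fun _ => pow_zero _]
  rfl

theorem coeff_sum_monomial_one_eq_zero_or_eq_one [CommSemiring R] (S : Finset (σ →₀ ℕ))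
    (d : σ →₀ ℕ) :
    (∑ e ∈ S, monomial e (1 : R)).coeff d = 0 ∨ (∑ e ∈ S, monomial e (1 : R)).coeff d = 1 := by
  classical
  simp only [coeff_sum, coeff_monomial, Finset.sum_ite_eq']
  exact (em _).symm.imp (if_neg ·) (if_pos ·)

theorem sum_coeff_mul_monomial_sub_one_nonneg [CommRing R] [PartialOrder R] [IsOrderedRing R]
    {Q : MvPolynomial σ R} (hQ : ∀ d, 0 ≤ Q.coeff d) (c : σ →₀ ℕ) {T : Finset (σ →₀ ℕ)}
    (hT : ∀ γ ∈ T, γ ∈ Q.support → γ + c ∈ T) :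
    0 ≤ ∑ γ ∈ T, (Q * (monomial c 1 - 1)).coeff γ := by
  classical
  suffices key : ∑ γ ∈ T, Q.coeff γ ≤ ∑ γ ∈ T, (Q * monomial c (1 : R)).coeff γ by
    simpa only [mul_sub, mul_one, coeff_sub, Finset.sum_sub_distrib, sub_nonneg] using key
  calc ∑ γ ∈ T, Q.coeff γ
      = ∑ γ ∈ T with γ ∈ Q.support, Q.coeff γ :=
        (Finset.sum_filter_of_ne fun _ _ h => mem_support_iff.2 h).symm
    _ = ∑ γ ∈ (T.filter (· ∈ Q.support)).image (· + c), (Q * monomial c (1 : R)).coeff γ := by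
        rw [Finset.sum_image fun _ _ _ _ => add_right_cancel]
        simp only [coeff_mul_monomial, mul_one]
    _ ≤ ∑ γ ∈ T, (Q * monomial c (1 : R)).coeff γ := by
        refine Finset.sum_le_sum_of_subset_of_nonneg ?_ fun γ _ _ => ?_
        · simp only [Finset.subset_iff, Finset.mem_image, Finset.mem_filter]
          rintro _ ⟨γ, ⟨hγT, hγQ⟩, rfl⟩
          exact hT γ hγT hγQ
        · rw [coeff_mul_monomial']
          split_ifs
          · simpa using hQ _
          · exact le_rfl

theorem mem_closure_of_monomial_sub_one_eq_sum [CommRing R] [PartialOrder R]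
    [IsStrictOrderedRing R] [Fintype ι] {c : ι → σ →₀ ℕ} {B : σ →₀ ℕ}
    (Q : ι → MvPolynomial σ R) (hQ : ∀ j d, 0 ≤ (Q j).coeff d)
    (h : monomial B (1 : R) - 1 = ∑ j, Q j * (monomial (c j) 1 - 1)) :
    B ∈ AddSubmonoid.closure (Set.range c) := by
  classical
  set T := ({0} ∪ Finset.univ.biUnion fun j => (Q j).support.image (· + c j)).filter
    (· ∈ AddSubmonoid.closure (Set.range c))
  have h0T : 0 ∈ T := by simp [T]
  have hT : ∀ j, ∀ γ ∈ T, γ ∈ (Q j).support → γ + c j ∈ T := fun j γ hγT hγQ => by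
    simp only [T, Finset.mem_filter] at hγT ⊢
    refine ⟨Finset.mem_union_right _ (Finset.mem_biUnion.2 ⟨j, Finset.mem_univ _,
      Finset.mem_image_of_mem _ hγQ⟩), add_mem hγT.2 (AddSubmonoid.subset_closure ⟨j, rfl⟩)⟩
  have hsum := congrArg (fun f => ∑ γ ∈ T, f.coeff γ) h
  simp only [coeff_sub, coeff_monomial, coeff_one, Finset.sum_sub_distrib, Finset.sum_ite_eq,
    if_pos h0T, coeff_sum] at hsum
  rw [Finset.sum_comm] at hsum
  have hnonneg := Finset.sum_nonneg fun j (_ : j ∈ Finset.univ) =>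
    sum_coeff_mul_monomial_sub_one_nonneg (hQ j) (c j) (hT j)
  have hBT : B ∈ T := by
    by_contra hBT
    rw [← hsum, if_neg hBT, zero_sub, neg_nonneg] at hnonneg
    exact hnonneg.not_gt zero_lt_one
  exact (Finset.mem_filter.1 hBT).2

theorem monomial_add_sub_one [CommRing R] (γ c : σ →₀ ℕ) :
    monomial (γ + c) (1 : R) - 1 = (monomial γ 1 - 1) + monomial γ 1 * (monomial c 1 - 1) := by
  rw [mul_sub, mul_one, monomial_mul, one_mul]
  ring

theorem exists_finset_monomial_sub_one_eq_sum [CommRing R] [Fintype ι] {c : ι → σ →₀ ℕ}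
    {B : σ →₀ ℕ} (hB : B ∈ AddSubmonoid.closure (Set.range c)) :
    ∃ S : ι → Finset (σ →₀ ℕ), monomial B (1 : R) - 1 =
      ∑ j, (∑ d ∈ S j, monomial d 1) * (monomial (c j) 1 - 1) := by
  classical
  suffices key : ∃ S : ι → Finset (σ →₀ ℕ), (monomial B (1 : R) - 1 =
      ∑ j, (∑ d ∈ S j, monomial d 1) * (monomial (c j) 1 - 1)) ∧ ∀ j, ∀ d ∈ S j, d < B from
    key.imp fun _ => And.left
  induction hB using AddSubmonoid.closure_induction_left with
  | zero => exact ⟨fun _ => ∅, by simp, by simp⟩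
  | add_left x hx γ _ ih =>
    obtain ⟨j, rfl⟩ := hx
    obtain ⟨S, hS, hlt⟩ := ih
    rcases eq_or_ne (c j) 0 with hc | hc
    · exact ⟨S, by simpa [hc] using hS, by simpa [hc] using hlt⟩
    have hγ : γ < c j + γ := lt_add_of_pos_left γ (pos_iff_ne_zero.2 hc)
    have hγS : γ ∉ S j := fun h => (hlt j γ h).false
    refine ⟨Function.update S j (insert γ (S j)), ?_, fun k d hd => ?_⟩
    · have hterm : ∀ k, (∑ d ∈ Function.update S j (insert γ (S j)) k, monomial d (1 : R)) =
          (∑ d ∈ S k, monomial d 1) + if k = j then monomial γ 1 else 0 := fun k => by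
        rcases eq_or_ne k j with rfl | hk
        · simp [Finset.sum_insert hγS, add_comm]
        · simp [hk]
      simp only [hterm, add_mul, Finset.sum_add_distrib, ite_mul, zero_mul, Finset.sum_ite_eq',
        Finset.mem_univ, if_true, ← hS]
      rw [add_comm (c j), monomial_add_sub_one]
    · rcases eq_or_ne k j with rfl | hk
      · rcases Finset.mem_insert.1 (by simpa using hd) with rfl | hd
        · exact hγ
        · exact (hlt k d hd).trans hγ
      · exact (hlt k d (by simpa [hk] using hd)).trans hγ

end MvPolynomial

theorem zero_one_representation
    (m n : ℕ) (A : Matrix (Fin m) (Fin n) ℕ) (b : Fin m → ℕ)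
    (Q : Fin n → MvPolynomial (Fin m) ℝ)
    (hQ : ∀ j d, 0 ≤ (Q j).coeff d)
    (h : (∏ i, X i ^ b i : MvPolynomial (Fin m) ℝ) - 1 =
        ∑ j, Q j * ((∏ i, X i ^ A i j) - 1)) :
    ∃ P : Fin n → MvPolynomial (Fin m) ℝ,
      (∀ j d, (P j).coeff d = 0 ∨ (P j).coeff d = 1) ∧
      (∏ i, X i ^ b i : MvPolynomial (Fin m) ℝ) - 1 =
        ∑ j, P j * ((∏ i, X i ^ A i j) - 1) := by
  simp only [prod_X_pow_eq_monomial_equivFunOnFinite] at h ⊢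
  obtain ⟨S, hS⟩ := exists_finset_monomial_sub_one_eq_sum (R := ℝ)
    (mem_closure_of_monomial_sub_one_eq_sum Q hQ h)
  exact ⟨fun j => ∑ d ∈ S j, monomial d 1,
    fun j => coeff_sum_monomial_one_eq_zero_or_eq_one (S j), hS⟩
end
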